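/- Let A be a nonempty finite type of cardinality d, let p : A → ℝ be a probability distribution (p i ≥ 0, Σ_i p i = 1), let ρ be the diagonal matrix with diagonal entries p i, and let σ be any state on A. Let D(σ) be the diagonal matrix whose entry at i is σ i i (the pinching of σ in the diagonal basis of ρ). Then, for the cost matrix K̃₀ = 1 − (1/d) • S: 𝒦_{K̃₀}(ρ, σ) ≥ 𝒦_{K̃₀}(ρ, D(σ)). -/

import Mathlib

open Matrix
open scoped Kronecker ComplexOrder

noncomputable def jordan {n : Type*} [Fintype n] (X Y : Matrix n n ℂ) : Matrix n n ℂ :=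
  (2 : ℂ)⁻¹ • (X * Y + Y * X)

noncomputable def trB {A B : Type*} [Fintype B] (M : Matrix (A × B) (A × B) ℂ) : Matrix A A ℂ :=
  Matrix.of fun i j => ∑ k, M (i, k) (j, k)

noncomputable def trA {A B : Type*} [Fintype A] (M : Matrix (A × B) (A × B) ℂ) : Matrix B B ℂ :=
  Matrix.of fun k l => ∑ i, M (i, k) (i, l)

def ptA {A B : Type*} (M : Matrix (A × B) (A × B) ℂ) : Matrix (A × B) (A × B) ℂ :=
  Matrix.of fun p q => M (q.1, p.2) (p.1, q.2)

def swap (A : Type*) [DecidableEq A] : Matrix (A × A) (A × A) ℂ :=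
  Matrix.of fun p q => if p.1 = q.2 ∧ p.2 = q.1 then 1 else 0

def IsState {A : Type*} [Fintype A] (ρ : Matrix A A ℂ) : Prop :=
  ρ.PosSemidef ∧ ρ.trace = 1

def IsJam {A B : Type*} [Fintype A] [Fintype B] [DecidableEq A]
    (J : Matrix (A × B) (A × B) ℂ) : Prop :=
  (ptA J).PosSemidef ∧ trB J = 1

noncomputable def cost {A B : Type*} [Fintype A] [Fintype B] [DecidableEq A] [DecidableEq B]
    (K : Matrix (A × B) (A × B) ℂ) (ρ : Matrix A A ℂ) (σ : Matrix B B ℂ) : ℝ :=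
  sInf { r : ℝ | ∃ J : Matrix (A × B) (A × B) ℂ, IsJam J ∧
      trA ((ρ ⊗ₖ (1 : Matrix B B ℂ)) * J) = σ ∧
      r = (Matrix.trace (K * jordan (ρ ⊗ₖ (1 : Matrix B B ℂ)) J)).re }

/-!
Conjugating a coupling `J` by `U ⊗ U`, with `U` a diagonal sign matrix, preserves the
Jamiołkowski constraints, commutes with `ρ ⊗ 1` for diagonal `ρ`, fixes the cost matrix
`1 - S/d` and turns the marginal `σ` into `UσU`. Averaging over all `2^d` sign matrices is the
Schur product of `J` with the positive semidefinite matrix `signCorr A`, and on the marginal it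
is the pinching `σ ↦ D(σ)`. Hence every cost attained for `σ` is attained for `D(σ)`. The
infimum for `D(σ)` is over a set bounded below, because the entries of a Jamiołkowski matrix are
bounded by `d`, and the set for `σ` is nonempty, containing the value at `J = 1 ⊗ σ`.
-/

section PartialOperations

variable {A B : Type*}

lemma ptA_kronecker (X : Matrix A A ℂ) (Y : Matrix B B ℂ) : ptA (X ⊗ₖ Y) = Xᵀ ⊗ₖ Y := by
  ext p q
  simp [ptA, kroneckerMap_apply]

lemma trA_kronecker [Fintype A] (X : Matrix A A ℂ) (Y : Matrix B B ℂ) :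
    trA (X ⊗ₖ Y) = X.trace • Y := by
  ext k l
  simp [trA, kroneckerMap_apply, trace, Finset.sum_mul]

lemma trB_kronecker [Fintype B] (X : Matrix A A ℂ) (Y : Matrix B B ℂ) :
    trB (X ⊗ₖ Y) = Y.trace • X := by
  ext i j
  simp [trB, kroneckerMap_apply, trace, Finset.mul_sum, mul_comm]

lemma trace_ptA [Fintype A] [Fintype B] (M : Matrix (A × B) (A × B) ℂ) :
    (ptA M).trace = M.trace := rfl

lemma trace_trB [Fintype A] [Fintype B] (M : Matrix (A × B) (A × B) ℂ) :
    (trB M).trace = M.trace := by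
  simp [trace, trB, Fintype.sum_prod_type]

lemma ptA_hadamard (M N : Matrix (A × B) (A × B) ℂ) : ptA (M ⊙ N) = ptA M ⊙ ptA N := rfl

end PartialOperations

lemma Matrix.PosSemidef.norm_apply_sq_le {n : Type*} [Fintype n]
    {N : Matrix n n ℂ} (hN : N.PosSemidef) (x y : n) :
    ‖N x y‖ ^ 2 ≤ (N x x).re * (N y y).re := by
  have hdet := (hN.submatrix ![x, y]).det_nonneg
  rw [det_fin_two] at hdet
  simp only [submatrix_apply, Matrix.cons_val_zero, Matrix.cons_val_one] at hdet
  have hyx : N y x = star (N x y) := (hN.1.apply y x).symm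
  rw [hyx, Complex.star_def, Complex.mul_conj, Complex.normSq_eq_norm_sq,
    Complex.nonneg_iff] at hdet
  have hx := Complex.nonneg_iff.mp (hN.diag_nonneg (i := x))
  have hy := Complex.nonneg_iff.mp (hN.diag_nonneg (i := y))
  simp only [Complex.sub_re, Complex.mul_re, ← hx.2, ← hy.2] at hdet
  norm_cast at hdet
  linarith [hdet.1]

lemma Matrix.PosSemidef.re_apply_le_trace {n : Type*} [Fintype n]
    {N : Matrix n n ℂ} (hN : N.PosSemidef) (x : n) : (N x x).re ≤ N.trace.re := by
  rw [trace, Complex.re_sum]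
  exact Finset.single_le_sum (f := fun i => (N i i).re)
    (fun i _ => (Complex.nonneg_iff.mp (hN.diag_nonneg (i := i))).1) (Finset.mem_univ x)

lemma Matrix.PosSemidef.norm_apply_le_trace {n : Type*} [Fintype n]
    {N : Matrix n n ℂ} (hN : N.PosSemidef) (x y : n) : ‖N x y‖ ≤ N.trace.re := by
  have hx := hN.re_apply_le_trace x
  have hy := hN.re_apply_le_trace y
  have hx0 := (Complex.nonneg_iff.mp (hN.diag_nonneg (i := x))).1
  have hy0 := (Complex.nonneg_iff.mp (hN.diag_nonneg (i := y))).1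
  refine pow_le_pow_iff_left₀ (norm_nonneg _) (hx0.trans hx) two_ne_zero |>.mp ?_
  calc ‖N x y‖ ^ 2 ≤ (N x x).re * (N y y).re := hN.norm_apply_sq_le x y
    _ ≤ N.trace.re ^ 2 := by rw [sq]; exact mul_le_mul hx hy hy0 (hx0.trans hx)

lemma trace_mul_jordan {n : Type*} [Fintype n] (K X J : Matrix n n ℂ) :
    (K * jordan X J).trace = (jordan K X * J).trace := by
  simp only [jordan, Matrix.mul_smul, Matrix.smul_mul, trace_smul, Matrix.mul_add,
    Matrix.add_mul, trace_add, ← Matrix.mul_assoc]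
  rw [trace_mul_cycle K J X]

lemma norm_trace_mul_le {n : Type*} [Fintype n] (M J : Matrix n n ℂ) {c : ℝ}
    (hJ : ∀ a b, ‖J a b‖ ≤ c) : ‖(M * J).trace‖ ≤ (∑ a, ∑ b, ‖M a b‖) * c := by
  simp only [trace, diag_apply, mul_apply, Finset.sum_mul]
  refine (norm_sum_le _ _).trans (Finset.sum_le_sum fun a _ => ?_)
  refine (norm_sum_le _ _).trans (Finset.sum_le_sum fun b _ => ?_)
  rw [norm_mul]
  exact mul_le_mul_of_nonneg_left (hJ b a) (norm_nonneg _)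

lemma IsJam.norm_apply_le {A B : Type*} [Fintype A] [Fintype B] [DecidableEq A] [DecidableEq B]
    {J : Matrix (A × B) (A × B) ℂ} (hJ : IsJam J) (x y : A × B) :
    ‖J x y‖ ≤ Fintype.card A := by
  have h := hJ.1.norm_apply_le_trace (y.1, x.2) (x.1, y.2)
  rwa [trace_ptA, ← trace_trB, hJ.2, trace_one, Complex.natCast_re] at h

lemma bddBelow_cost {A B : Type*} [Fintype A] [Fintype B] [DecidableEq A] [DecidableEq B]
    (K : Matrix (A × B) (A × B) ℂ) (ρ : Matrix A A ℂ) (σ : Matrix B B ℂ) :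
    BddBelow { r : ℝ | ∃ J : Matrix (A × B) (A × B) ℂ, IsJam J ∧
      trA ((ρ ⊗ₖ (1 : Matrix B B ℂ)) * J) = σ ∧
      r = (Matrix.trace (K * jordan (ρ ⊗ₖ (1 : Matrix B B ℂ)) J)).re } := by
  set M := jordan K (ρ ⊗ₖ (1 : Matrix B B ℂ))
  refine ⟨-((∑ a, ∑ b, ‖M a b‖) * Fintype.card A), ?_⟩
  rintro _ ⟨J, hJ, -, rfl⟩
  rw [trace_mul_jordan, neg_le]
  exact (neg_le_abs _).trans <| (Complex.abs_re_le_norm _).trans <|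
    norm_trace_mul_le M J hJ.norm_apply_le

section Hadamard

variable {n : Type*} [Fintype n] [DecidableEq n]

lemma diagonal_mul_hadamard (v : n → ℂ) (M N : Matrix n n ℂ) :
    diagonal v * (M ⊙ N) = (diagonal v * M) ⊙ N := by
  ext a b
  simp only [diagonal_mul, hadamard_apply, mul_assoc]

lemma hadamard_mul_diagonal (v : n → ℂ) (M N : Matrix n n ℂ) :
    (M ⊙ N) * diagonal v = (M * diagonal v) ⊙ N := by
  ext a b
  simp only [mul_diagonal, hadamard_apply]
  ring

lemma jordan_diagonal_hadamard (v : n → ℂ) (M N : Matrix n n ℂ) :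
    jordan (diagonal v) (M ⊙ N) = jordan (diagonal v) M ⊙ N := by
  rw [jordan, jordan, diagonal_mul_hadamard, hadamard_mul_diagonal, ← add_hadamard,
    smul_hadamard]

omit [DecidableEq n] in
lemma trace_mul_hadamard (K M N : Matrix n n ℂ) :
    (K * (M ⊙ N)).trace = ((K ⊙ Nᵀ) * M).trace := by
  simp only [trace, diag_apply, mul_apply, hadamard_apply, transpose_apply]
  exact Finset.sum_congr rfl fun a _ => Finset.sum_congr rfl fun b _ => by ring

end Hadamard

section SignTwirl

variable {A : Type*} [Fintype A] [DecidableEq A]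

noncomputable def signOf (s : A → Bool) (i : A) : ℂ := if s i then -1 else 1

omit [Fintype A] [DecidableEq A] in
lemma signOf_mul_self (s : A → Bool) (i : A) : signOf s i * signOf s i = 1 := by
  unfold signOf; split_ifs <;> norm_num

omit [Fintype A] [DecidableEq A] in
lemma star_signOf (s : A → Bool) (i : A) : star (signOf s i) = signOf s i := by
  unfold signOf; split_ifs <;> simp

lemma sum_signOf_mul_signOf (i j : A) :
    ∑ s : A → Bool, signOf s i * signOf s j = if i = j then 2 ^ Fintype.card A else 0 := by
  split_ifs with hij
  · subst hij
    simp [signOf_mul_self]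
  · set flip : (A → Bool) → (A → Bool) := fun s => Function.update s i (!s i)
    have hflip : Function.Involutive flip := fun s => by simp [flip]
    have hneg : ∀ s, signOf (flip s) i * signOf (flip s) j = -(signOf s i * signOf s j) := by
      intro s
      have hi : signOf (flip s) i = -signOf s i := by
        simp only [signOf, flip, Function.update_self]
        cases s i <;> norm_num
      have hj : signOf (flip s) j = signOf s j := by
        simp only [signOf, flip, Function.update_of_ne (Ne.symm hij)]
      rw [hi, hj, neg_mul]
    have h := Equiv.sum_comp (hflip.toPerm flip) (fun s => signOf s i * signOf s j)
    simp only [Function.Involutive.coe_toPerm, hneg, Finset.sum_neg_distrib] at h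
    exact self_eq_neg.mp h.symm

lemma inv_two_pow_mul_sum_signOf_mul_signOf (i j : A) :
    ((2 : ℂ) ^ Fintype.card A)⁻¹ * ∑ s : A → Bool, signOf s i * signOf s j
      = (1 : Matrix A A ℂ) i j := by
  rw [sum_signOf_mul_signOf, one_apply]
  split_ifs <;> simp

noncomputable def pairSign (s : A → Bool) (a : A × A) : ℂ := signOf s a.1 * signOf s a.2

variable (A) in
noncomputable def signCorr : Matrix (A × A) (A × A) ℂ :=
  ((2 : ℂ) ^ Fintype.card A)⁻¹ • ∑ s : A → Bool, vecMulVec (pairSign s) (pairSign s)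

lemma signCorr_apply (a b : A × A) :
    signCorr A a b =
      ((2 : ℂ) ^ Fintype.card A)⁻¹ * ∑ s : A → Bool, pairSign s a * pairSign s b := by
  simp [signCorr, Matrix.sum_apply, vecMulVec_apply]

lemma posSemidef_signCorr : (signCorr A).PosSemidef := by
  refine .smul (posSemidef_sum _ fun s _ => ?_) (by positivity)
  have hstar : star (pairSign s) = pairSign s := funext fun a => by
    simp [pairSign, star_signOf]
  simpa [hstar] using posSemidef_vecMulVec_self_star (pairSign s)

lemma signCorr_apply_fst_eq (k i j : A) : signCorr A (k, i) (k, j) = (1 : Matrix A A ℂ) i j := by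
  rw [signCorr_apply, ← inv_two_pow_mul_sum_signOf_mul_signOf]
  congr 1
  refine Finset.sum_congr rfl fun s _ => ?_
  calc pairSign s (k, i) * pairSign s (k, j)
      = signOf s k * signOf s k * (signOf s i * signOf s j) := by simp only [pairSign]; ring
    _ = signOf s i * signOf s j := by rw [signOf_mul_self, one_mul]

lemma signCorr_apply_snd_eq (i j k : A) : signCorr A (i, k) (j, k) = (1 : Matrix A A ℂ) i j := by
  rw [signCorr_apply, ← inv_two_pow_mul_sum_signOf_mul_signOf]
  congr 1
  refine Finset.sum_congr rfl fun s _ => ?_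
  calc pairSign s (i, k) * pairSign s (j, k)
      = signOf s k * signOf s k * (signOf s i * signOf s j) := by simp only [pairSign]; ring
    _ = signOf s i * signOf s j := by rw [signOf_mul_self, one_mul]

lemma signCorr_apply_swap (i j : A) : signCorr A (i, j) (j, i) = 1 := by
  have h : ∀ s, pairSign s (j, i) = pairSign s (i, j) := fun s => mul_comm _ _
  rw [signCorr_apply]
  simp only [h]
  rw [← signCorr_apply, signCorr_apply_fst_eq, one_apply_eq]

lemma ptA_signCorr : ptA (signCorr A) = signCorr A := by
  ext a b
  simp only [ptA, of_apply, signCorr_apply, pairSign]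
  congr 1
  exact Finset.sum_congr rfl fun s _ => by ring

lemma signCorr_transpose : (signCorr A)ᵀ = signCorr A := by
  ext a b
  simp only [transpose_apply, signCorr_apply, mul_comm]

lemma trA_hadamard_signCorr (M : Matrix (A × A) (A × A) ℂ) :
    trA (M ⊙ signCorr A) = diagonal fun k => trA M k k := by
  ext k l
  change ∑ i, M (i, k) (i, l) * signCorr A (i, k) (i, l) = _
  simp only [signCorr_apply_fst_eq, one_apply, diagonal_apply, mul_ite, mul_one, mul_zero]
  split_ifs with h
  · subst h; rfl
  · exact Finset.sum_const_zero

lemma trB_hadamard_signCorr (M : Matrix (A × A) (A × A) ℂ) :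
    trB (M ⊙ signCorr A) = diagonal fun i => trB M i i := by
  ext i j
  change ∑ k, M (i, k) (j, k) * signCorr A (i, k) (j, k) = _
  simp only [signCorr_apply_snd_eq, one_apply, diagonal_apply, mul_ite, mul_one, mul_zero]
  split_ifs with h
  · subst h; rfl
  · exact Finset.sum_const_zero

lemma IsJam.hadamard_signCorr {J : Matrix (A × A) (A × A) ℂ} (hJ : IsJam J) :
    IsJam (J ⊙ signCorr A) := by
  refine ⟨?_, ?_⟩
  · rw [ptA_hadamard, ptA_signCorr]
    exact hJ.1.hadamard posSemidef_signCorr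
  · rw [trB_hadamard_signCorr, hJ.2]
    simp [← diagonal_one]

lemma one_hadamard_signCorr : 1 ⊙ signCorr A = 1 := by
  rw [one_hadamard, ← diagonal_one]
  congr 1
  ext a
  exact (signCorr_apply_fst_eq a.1 a.2 a.2).trans (one_apply_eq _)

lemma swap_hadamard_signCorr : swap A ⊙ signCorr A = swap A := by
  ext ⟨i, j⟩ ⟨k, l⟩
  simp only [hadamard_apply, _root_.swap, of_apply]
  split_ifs with h
  · obtain ⟨rfl, rfl⟩ := h
    rw [signCorr_apply_swap, one_mul]
  · exact zero_mul _

lemma one_sub_smul_swap_hadamard_signCorr (c : ℂ) :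
    (1 - c • swap A) ⊙ signCorr A = 1 - c • swap A := by
  ext a b
  have h1 := congrFun (congrFun (one_hadamard_signCorr (A := A)) a) b
  have h2 := congrFun (congrFun (swap_hadamard_signCorr (A := A)) a) b
  simp only [hadamard_apply, Matrix.sub_apply, Matrix.smul_apply, smul_eq_mul] at h1 h2 ⊢
  rw [sub_mul, mul_assoc, h1, h2]

end SignTwirl

lemma isJam_one_kronecker {A B : Type*} [Fintype A] [Fintype B] [DecidableEq A]
    {σ : Matrix B B ℂ} (hσ : IsState σ) : IsJam ((1 : Matrix A A ℂ) ⊗ₖ σ) := by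
  refine ⟨?_, ?_⟩
  · rw [ptA_kronecker, transpose_one]
    exact PosSemidef.one.kronecker hσ.1
  · rw [trB_kronecker, hσ.2, one_smul]

theorem cost_diagonal_pinch_le {A : Type*} [Fintype A] [DecidableEq A]
    {K : Matrix (A × A) (A × A) ℂ} (hK : K ⊙ signCorr A = K) {w : A → ℂ} (hw : ∑ i, w i = 1)
    {σ : Matrix A A ℂ} (hσ : IsState σ) :
    cost K (diagonal w) (diagonal fun i => σ i i) ≤ cost K (diagonal w) σ := by
  have hρ : diagonal w ⊗ₖ (1 : Matrix A A ℂ) = diagonal fun q => w q.1 := by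
    rw [← diagonal_one, diagonal_kronecker_diagonal]
    simp
  have hmarg : trA ((diagonal w ⊗ₖ (1 : Matrix A A ℂ)) * (1 ⊗ₖ σ)) = σ := by
    rw [← mul_kronecker_mul, mul_one, one_mul, trA_kronecker, trace_diagonal, hw, one_smul]
  refine csInf_le_csInf (bddBelow_cost _ _ _) ⟨_, _, isJam_one_kronecker hσ, hmarg, rfl⟩ ?_
  rintro _ ⟨J, hJ, hJσ, rfl⟩
  refine ⟨J ⊙ signCorr A, hJ.hadamard_signCorr, ?_, ?_⟩
  · rw [hρ, diagonal_mul_hadamard, trA_hadamard_signCorr, ← hρ, hJσ]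
  · rw [hρ, jordan_diagonal_hadamard, trace_mul_hadamard, signCorr_transpose, hK]

theorem stmt18_general {A : Type*} [Fintype A] [DecidableEq A]
    (p : A → ℝ) (hp1 : ∑ i, p i = 1)
    (σ : Matrix A A ℂ) (hσ : IsState σ) :
    cost (1 - ((1 : ℂ) / (Fintype.card A : ℂ)) • swap A)
        (Matrix.diagonal fun i => (p i : ℂ)) (Matrix.diagonal fun i => σ i i) ≤
      cost (1 - ((1 : ℂ) / (Fintype.card A : ℂ)) • swap A)
        (Matrix.diagonal fun i => (p i : ℂ)) σ :=
  cost_diagonal_pinch_le (one_sub_smul_swap_hadamard_signCorr _) (by exact_mod_cast hp1) hσ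

theorem stmt18 {A : Type*} [Fintype A] [Nonempty A] [DecidableEq A]
    (p : A → ℝ) (hp : ∀ i, 0 ≤ p i) (hp1 : ∑ i, p i = 1)
    (σ : Matrix A A ℂ) (hσ : IsState σ) :
    cost (1 - ((1 : ℂ) / (Fintype.card A : ℂ)) • swap A)
        (Matrix.diagonal fun i => (p i : ℂ)) (Matrix.diagonal fun i => σ i i) ≤
      cost (1 - ((1 : ℂ) / (Fintype.card A : ℂ)) • swap A)
        (Matrix.diagonal fun i => (p i : ℂ)) σ :=
  stmt18_general p hp1 σ hσ
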